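/- (Disjoint occurrence of droplets) For the algorithmic droplet construction on the Duarte model: for every ω ∈ Ω and every k ≠ j, the droplets satisfy D_k(ω) ∩ D_j(ω) = ∅. -/

import Mathlib

open Set

attribute [local instance] Classical.propDecidable

/-- The Duarte update family: 2-subsets of `{-e₁, e₂, -e₂}`. -/
def duarteU : Set (Set (ℤ × ℤ)) :=
  {{(-1, 0), (0, 1)}, {(-1, 0), (0, -1)}, {(0, 1), (0, -1)}}

/-- One step of the `U`-bootstrap process restricted to the volume `Λ`. -/
def bootStepIn (U : Set (Set (ℤ × ℤ))) (Λ Z : Set (ℤ × ℤ)) : Set (ℤ × ℤ) :=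
  Z ∪ {x | x ∈ Λ ∧ ∃ X ∈ U, (fun y => y + x) '' X ⊆ Z}

def bootIterIn (U : Set (Set (ℤ × ℤ))) (Λ Z : Set (ℤ × ℤ)) : ℕ → Set (ℤ × ℤ)
  | 0 => Z
  | t + 1 => bootStepIn U Λ (bootIterIn U Λ Z t)

/-- The closure of `Z` under the `U`-bootstrap process in `Λ`. -/
def bootClosureIn (U : Set (Set (ℤ × ℤ))) (Λ Z : Set (ℤ × ℤ)) : Set (ℤ × ℤ) :=
  ⋃ t, bootIterIn U Λ Z t

/-- The `i`-th column `C_i` of the region `V` (for `1 ≤ i ≤ N`). -/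
def col (N i : ℕ) : Set (ℤ × ℤ) :=
  {p | p.1 = (i : ℤ) - N ∧ |p.2| < (N : ℤ) ^ 2 - ((i : ℤ) - 1) * N}

/-- The augmented column `C̄_i = C_i ∪ ∂_⊥ C_i`. -/
def colBar (N i : ℕ) : Set (ℤ × ℤ) :=
  {p | p.1 = (i : ℤ) - N ∧ |p.2| ≤ (N : ℤ) ^ 2 - ((i : ℤ) - 1) * N}

/-- The region `V = ⋃_{i=1}^N C_i`. -/
def Vreg (N : ℕ) : Set (ℤ × ℤ) := ⋃ i ∈ Finset.Icc 1 N, col N i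

/-- The region `V̄ = ⋃_{i=1}^N C̄_i`. -/
def VregBar (N : ℕ) : Set (ℤ × ℤ) := ⋃ i ∈ Finset.Icc 1 N, colBar N i

/-- `C̄_k` contains a vertical interval of length `ℓ` which is infectable (by
the Duarte bootstrap process in `V` with healthy parallel boundary conditions)
from the empty sites of `σ` in `V̄` after removing all empty vertices in the
columns `C̄_1, …, C̄_{ξ-1}`. -/
def hasInfInterval (N ℓ ξ k : ℕ) (σ : ℤ × ℤ → Bool) : Prop :=
  ∃ j0 : ℤ, ∀ m : ℕ, m < ℓ →
    (((k : ℤ) - N, j0 + m) ∈ colBar N k ∧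
      ((k : ℤ) - N, j0 + m) ∈ bootClosureIn duarteU (Vreg N)
        ({x ∈ VregBar N | σ x = false} \ ⋃ i ∈ Finset.Icc 1 (ξ - 1), colBar N i))

/-- The algorithm of Definition 4.4: scanning the columns from left to right,
at step `k`, if `C̄_k` contains an infectable interval of length `≥ ℓ`, heal
all the columns `C̄_{ξ_k}, …, C̄_k`, where `ξ_k` is the largest `ξ ≤ k` such
that the infectability survives the removal of all empty sites to the left of
column `ξ`. -/
noncomputable def psiAlg (N ℓ : ℕ) (σ0 : ℤ × ℤ → Bool) : ℕ → (ℤ × ℤ → Bool)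
  | 0 => σ0
  | k + 1 =>
    if hasInfInterval N ℓ 1 (k + 1) (psiAlg N ℓ σ0 k) then
      fun x =>
        if x ∈ ⋃ i ∈ Finset.Icc
            (Nat.findGreatest
              (fun ξ => hasInfInterval N ℓ ξ (k + 1) (psiAlg N ℓ σ0 k)) (k + 1))
            (k + 1), colBar N i
        then true else psiAlg N ℓ σ0 k x
    else psiAlg N ℓ σ0 k

/-- The index `ξ_k`. -/
noncomputable def xiAlg (N ℓ : ℕ) (σ0 : ℤ × ℤ → Bool) (k : ℕ) : ℕ :=
  Nat.findGreatest (fun ξ => hasInfInterval N ℓ ξ k (psiAlg N ℓ σ0 (k - 1))) k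

/-- The droplet `D_k(ω)`: empty if `ψ⁽ᵏ⁾ = ψ⁽ᵏ⁻¹⁾`, and `⋃_{i=ξ_k}^k C̄_i`
otherwise. -/
noncomputable def droplet (N ℓ : ℕ) (σ0 : ℤ × ℤ → Bool) (k : ℕ) : Set (ℤ × ℤ) :=
  if psiAlg N ℓ σ0 k = psiAlg N ℓ σ0 (k - 1) then ∅
  else ⋃ i ∈ Finset.Icc (xiAlg N ℓ σ0 k) k, colBar N i

/-!
Once step `k` fires, the column `C̄_k` is healed for good. Every Duarte rule needs a vertical
neighbour in the site's own column, so a column free of infection stays free of it; and since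
the rules only look left or vertically, infection to the right of that column is produced by
the infection to its right alone. So at any later step `j` all infection left of `C̄_{k+1}` can be
removed without losing the infectable interval in `C̄_j`: `ξ_j > k`, and `D_j` lies strictly to
the right of `D_k`.
-/

lemma bootIterIn_mono (U : Set (Set (ℤ × ℤ))) (Λ : Set (ℤ × ℤ)) {Z Z' : Set (ℤ × ℤ)}
    (h : Z ⊆ Z') (t : ℕ) : bootIterIn U Λ Z t ⊆ bootIterIn U Λ Z' t := by
  induction t with
  | zero => exact h
  | succ t ih =>
    rintro x (hx | ⟨hxΛ, X, hX, hsub⟩)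
    · exact Or.inl (ih hx)
    · exact Or.inr ⟨hxΛ, X, hX, hsub.trans ih⟩

lemma bootClosureIn_mono (U : Set (Set (ℤ × ℤ))) (Λ : Set (ℤ × ℤ)) {Z Z' : Set (ℤ × ℤ)}
    (h : Z ⊆ Z') : bootClosureIn U Λ Z ⊆ bootClosureIn U Λ Z' :=
  iUnion_mono (bootIterIn_mono U Λ h)

lemma exists_fst_eq_zero_of_mem_duarteU {X : Set (ℤ × ℤ)} (hX : X ∈ duarteU) :
    ∃ y ∈ X, y.1 = 0 := by
  simp only [duarteU, mem_insert_iff, mem_singleton_iff] at hX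
  rcases hX with rfl | rfl | rfl <;> simp

lemma fst_eq_zero_or_neg_one_of_mem_duarteU {X : Set (ℤ × ℤ)} (hX : X ∈ duarteU)
    {y : ℤ × ℤ} (hy : y ∈ X) : y.1 = 0 ∨ y.1 = -1 := by
  simp only [duarteU, mem_insert_iff, mem_singleton_iff] at hX
  rcases hX with rfl | rfl | rfl <;>
    simp only [mem_insert_iff, mem_singleton_iff] at hy <;> rcases hy with rfl | rfl <;> simp

section HealthyColumn

variable {Λ Z : Set (ℤ × ℤ)} {c : ℤ}

lemma fst_ne_of_mem_bootIterIn_duarteU (hZ : ∀ p ∈ Z, p.1 ≠ c) (t : ℕ) :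
    ∀ p ∈ bootIterIn duarteU Λ Z t, p.1 ≠ c := by
  induction t with
  | zero => exact hZ
  | succ t ih =>
    rintro p (hp | ⟨-, X, hX, hsub⟩) hpc
    · exact ih p hp hpc
    · obtain ⟨y, hy, hy1⟩ := exists_fst_eq_zero_of_mem_duarteU hX
      exact ih _ (hsub ⟨y, hy, rfl⟩) (by simp [hy1, hpc])

lemma mem_bootIterIn_duarteU_diff_of_lt (hZ : ∀ p ∈ Z, p.1 ≠ c) (t : ℕ) :
    ∀ p ∈ bootIterIn duarteU Λ Z t, c < p.1 →
      p ∈ bootIterIn duarteU Λ (Z \ {q | q.1 ≤ c}) t := by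
  induction t with
  | zero => exact fun p hp hpc => ⟨hp, not_le.mpr hpc⟩
  | succ t ih =>
    rintro p (hp | ⟨hpΛ, X, hX, hsub⟩) hpc
    · exact Or.inl (ih p hp hpc)
    · refine Or.inr ⟨hpΛ, X, hX, ?_⟩
      rintro _ ⟨y, hy, rfl⟩
      have hyp : y + p ∈ bootIterIn duarteU Λ Z t := hsub ⟨y, hy, rfl⟩
      have hne : y.1 + p.1 ≠ c := fst_ne_of_mem_bootIterIn_duarteU hZ t _ hyp
      have hy1 := fst_eq_zero_or_neg_one_of_mem_duarteU hX hy
      exact ih _ hyp (show c < y.1 + p.1 by omega)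

lemma mem_bootClosureIn_duarteU_diff_of_lt (hZ : ∀ p ∈ Z, p.1 ≠ c) {p : ℤ × ℤ}
    (hp : p ∈ bootClosureIn duarteU Λ Z) (hpc : c < p.1) :
    p ∈ bootClosureIn duarteU Λ (Z \ {q | q.1 ≤ c}) := by
  obtain ⟨t, ht⟩ := mem_iUnion.mp hp
  exact mem_iUnion.mpr ⟨t, mem_bootIterIn_duarteU_diff_of_lt hZ t p ht hpc⟩

end HealthyColumn

lemma hasInfInterval_of_colBar_healthy {N ℓ k j : ℕ} {σ : ℤ × ℤ → Bool} (hkj : k < j)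
    (hσ : ∀ x ∈ colBar N k, σ x = true) (h : hasInfInterval N ℓ 1 j σ) :
    hasInfInterval N ℓ (k + 1) j σ := by
  set Z : Set (ℤ × ℤ) := {x ∈ VregBar N | σ x = false}
  have hZ : ∀ p ∈ Z, p.1 ≠ (k : ℤ) - N := by
    rintro p ⟨hpV, hpσ⟩ hpk
    obtain ⟨i, -, hpi, hp2⟩ := mem_iUnion₂.mp hpV
    obtain rfl : i = k := by omega
    simp [hσ p ⟨hpi, hp2⟩] at hpσ
  have hleft : Z \ {q | q.1 ≤ (k : ℤ) - N} ⊆ Z \ ⋃ i ∈ Finset.Icc 1 (k + 1 - 1), colBar N i := by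
    rintro q ⟨hqZ, hqk⟩
    refine ⟨hqZ, fun hq => hqk ?_⟩
    obtain ⟨i, hi, hqi, -⟩ := mem_iUnion₂.mp hq
    have := (Finset.mem_Icc.mp hi).2
    show q.1 ≤ (k : ℤ) - N
    omega
  obtain ⟨j0, hj0⟩ := h
  refine ⟨j0, fun m hm => ⟨(hj0 m hm).1, bootClosureIn_mono _ _ hleft ?_⟩⟩
  refine mem_bootClosureIn_duarteU_diff_of_lt hZ ?_ (show (k : ℤ) - N < (j : ℤ) - N by omega)
  simpa using (hj0 m hm).2

section Algorithm

variable {N ℓ : ℕ} {σ0 : ℤ × ℤ → Bool}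

lemma psiAlg_eq_true_of_le {m m' : ℕ} {x : ℤ × ℤ} (hmm' : m ≤ m')
    (h : psiAlg N ℓ σ0 m x = true) : psiAlg N ℓ σ0 m' x = true := by
  induction m', hmm' using Nat.le_induction with
  | base => exact h
  | succ m' _ ih =>
    rw [psiAlg]
    split_ifs <;> simp [ih]

lemma hasInfInterval_of_psiAlg_ne {k : ℕ} (h : psiAlg N ℓ σ0 k ≠ psiAlg N ℓ σ0 (k - 1)) :
    hasInfInterval N ℓ 1 k (psiAlg N ℓ σ0 (k - 1)) := by
  cases k with
  | zero => exact absurd rfl h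
  | succ m =>
    rw [Nat.add_sub_cancel] at h ⊢
    by_contra hinf
    exact h (by rw [psiAlg, if_neg hinf])

lemma psiAlg_eq_true_of_mem_colBar {k : ℕ} (h : psiAlg N ℓ σ0 k ≠ psiAlg N ℓ σ0 (k - 1))
    {x : ℤ × ℤ} (hx : x ∈ colBar N k) : psiAlg N ℓ σ0 k x = true := by
  cases k with
  | zero => exact absurd rfl h
  | succ m =>
    have hinf := hasInfInterval_of_psiAlg_ne h
    rw [Nat.add_sub_cancel] at hinf
    rw [psiAlg, if_pos hinf, if_pos]
    exact mem_iUnion₂.mpr ⟨m + 1, Finset.mem_Icc.mpr ⟨Nat.findGreatest_le _, le_rfl⟩, hx⟩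

lemma lt_xiAlg {k j : ℕ} (hkj : k < j) (hk : psiAlg N ℓ σ0 k ≠ psiAlg N ℓ σ0 (k - 1))
    (hj : psiAlg N ℓ σ0 j ≠ psiAlg N ℓ σ0 (j - 1)) : k < xiAlg N ℓ σ0 j := by
  have healed : ∀ x ∈ colBar N k, psiAlg N ℓ σ0 (j - 1) x = true := fun x hx =>
    psiAlg_eq_true_of_le (by omega) (psiAlg_eq_true_of_mem_colBar hk hx)
  exact Nat.le_findGreatest hkj
    (hasInfInterval_of_colBar_healthy hkj healed (hasInfInterval_of_psiAlg_ne hj))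

lemma droplet_subset (k : ℕ) :
    droplet N ℓ σ0 k ⊆ {p | (xiAlg N ℓ σ0 k : ℤ) - N ≤ p.1 ∧ p.1 ≤ (k : ℤ) - N} := by
  unfold droplet
  split_ifs
  · exact empty_subset _
  · intro p hp
    obtain ⟨i, hi, hpi, -⟩ := mem_iUnion₂.mp hp
    have := Finset.mem_Icc.mp hi
    exact ⟨by omega, by omega⟩

lemma droplet_eq_empty {k : ℕ} (h : psiAlg N ℓ σ0 k = psiAlg N ℓ σ0 (k - 1)) :
    droplet N ℓ σ0 k = ∅ :=
  if_pos h

lemma disjoint_droplet_of_lt {k j : ℕ} (hkj : k < j) :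
    Disjoint (droplet N ℓ σ0 k) (droplet N ℓ σ0 j) := by
  by_cases hk : psiAlg N ℓ σ0 k = psiAlg N ℓ σ0 (k - 1)
  · simp [droplet_eq_empty hk]
  by_cases hj : psiAlg N ℓ σ0 j = psiAlg N ℓ σ0 (j - 1)
  · simp [droplet_eq_empty hj]
  have hξ := lt_xiAlg hkj hk hj
  refine disjoint_left.mpr fun p hpk hpj => ?_
  obtain ⟨-, hpk⟩ := droplet_subset k hpk
  obtain ⟨hpj, -⟩ := droplet_subset j hpj
  omega

end Algorithm

theorem stmt14_general (N ℓ : ℕ) (σ0 : ℤ × ℤ → Bool) (k j : ℕ)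
    (hkj : k ≠ j) :
    droplet N ℓ σ0 k ∩ droplet N ℓ σ0 j = ∅ := by
  rw [← disjoint_iff_inter_eq_empty]
  rcases hkj.lt_or_gt with h | h
  · exact disjoint_droplet_of_lt h
  · exact (disjoint_droplet_of_lt h).symm

/-- Disjoint occurrence of the droplets: for every configuration `ω` and all
`k ≠ j`, `D_k(ω) ∩ D_j(ω) = ∅`. -/
theorem stmt14 (N ℓ : ℕ) (σ0 : ℤ × ℤ → Bool) (k j : ℕ)
    (hk : 1 ≤ k) (hkN : k ≤ N) (hj : 1 ≤ j) (hjN : j ≤ N) (hkj : k ≠ j) :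
    droplet N ℓ σ0 k ∩ droplet N ℓ σ0 j = ∅ :=
  stmt14_general N ℓ σ0 k j hkj
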